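/- For every x > 0 one has 2x · Σ_{k=1}^∞ (4k+3x)/(k(k+x)(k+3x)) > 3·ln(1+3x) − ln(1+x). -/

import Mathlib

/-- `log (1+u) ≤ u - u²/2 + u³/3` for `u ≥ 0`. -/
lemma aux_log_le {u : ℝ} (hu : 0 ≤ u) :
    Real.log (1 + u) ≤ u - u ^ 2 / 2 + u ^ 3 / 3 := by
  set f : ℝ → ℝ := fun s => s - s ^ 2 / 2 + s ^ 3 / 3 - Real.log (1 + s) with hf
  have hder : ∀ t : ℝ, 0 < 1 + t →
      HasDerivAt f (1 - t + t ^ 2 - 1 / (1 + t)) t := by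
    intro t ht
    have h1 : HasDerivAt (fun s : ℝ => Real.log (1 + s)) (1 / (1 + t)) t := by
      have h0 : HasDerivAt (fun s : ℝ => 1 + s) 1 t := by
        simpa using (hasDerivAt_id t).const_add 1
      simpa using h0.log (ne_of_gt ht)
    have h2 : HasDerivAt (fun s : ℝ => s - s ^ 2 / 2 + s ^ 3 / 3)
        (1 - t + t ^ 2) t := by
      have h3 : HasDerivAt (fun s : ℝ => s - s ^ 2 / 2 + s ^ 3 / 3) _ t := ((hasDerivAt_id t).sub ((hasDerivAt_pow 2 t).div_const 2)).add
        ((hasDerivAt_pow 3 t).div_const 3)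
      convert h3 using 1
      push_cast; ring
    exact h2.sub h1
  have hpos : ∀ t : ℝ, 0 ≤ t → 0 ≤ 1 - t + t ^ 2 - 1 / (1 + t) := by
    intro t ht
    have h1 : (0:ℝ) < 1 + t := by linarith
    have : 1 - t + t ^ 2 - 1 / (1 + t) = t ^ 3 / (1 + t) := by
      field_simp; ring
    rw [this]; positivity
  have hmono : MonotoneOn f (Set.Ici (0:ℝ)) := by
    apply monotoneOn_of_deriv_nonneg (convex_Ici 0)
    · intro t ht
      exact (hder t (by simp at ht ⊢; linarith)).continuousAt.continuousWithinAt
    · intro t ht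
      rw [interior_Ici] at ht
      exact (hder t (by simp at ht ⊢; linarith)).differentiableAt.differentiableWithinAt
    · intro t ht
      rw [interior_Ici] at ht
      rw [(hder t (by simp at ht ⊢; linarith)).deriv]
      exact hpos t (le_of_lt ht)
  have h0 : f 0 = 0 := by simp [hf]
  have := hmono (Set.self_mem_Ici) (Set.mem_Ici.mpr hu) hu
  rw [h0] at this
  simp only [hf] at this
  linarith

/-- `v - v²/2 ≤ log (1+v)` for `v ≥ 0`. -/
lemma aux_le_log {v : ℝ} (hv : 0 ≤ v) :
    v - v ^ 2 / 2 ≤ Real.log (1 + v) := by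
  set f : ℝ → ℝ := fun s => Real.log (1 + s) - (s - s ^ 2 / 2) with hf
  have hder : ∀ t : ℝ, 0 < 1 + t →
      HasDerivAt f (1 / (1 + t) - (1 - t)) t := by
    intro t ht
    have h1 : HasDerivAt (fun s : ℝ => Real.log (1 + s)) (1 / (1 + t)) t := by
      have h0 : HasDerivAt (fun s : ℝ => 1 + s) 1 t := by
        simpa using (hasDerivAt_id t).const_add 1
      simpa using h0.log (ne_of_gt ht)
    have h2 : HasDerivAt (fun s : ℝ => s - s ^ 2 / 2) (1 - t) t := by
      have h3 : HasDerivAt (fun s : ℝ => s - s ^ 2 / 2) _ t := (hasDerivAt_id t).sub ((hasDerivAt_pow 2 t).div_const 2)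
      convert h3 using 1
      push_cast; ring
    exact h1.sub h2
  have hpos : ∀ t : ℝ, 0 ≤ t → 0 ≤ 1 / (1 + t) - (1 - t) := by
    intro t ht
    have h1 : (0:ℝ) < 1 + t := by linarith
    have : 1 / (1 + t) - (1 - t) = t ^ 2 / (1 + t) := by
      field_simp; ring
    rw [this]; positivity
  have hmono : MonotoneOn f (Set.Ici (0:ℝ)) := by
    apply monotoneOn_of_deriv_nonneg (convex_Ici 0)
    · intro t ht
      exact (hder t (by simp at ht ⊢; linarith)).continuousAt.continuousWithinAt
    · intro t ht
      rw [interior_Ici] at ht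
      exact (hder t (by simp at ht ⊢; linarith)).differentiableAt.differentiableWithinAt
    · intro t ht
      rw [interior_Ici] at ht
      rw [(hder t (by simp at ht ⊢; linarith)).deriv]
      exact hpos t (le_of_lt ht)
  have h0 : f 0 = 0 := by simp [hf]
  have := hmono (Set.self_mem_Ici) (Set.mem_Ici.mpr hv) hv
  rw [h0] at this
  simp only [hf] at this
  linarith

/-- key: for `0 ≤ v ≤ u ≤ 1`, `3 log(1+u) - log(1+v) ≤ 3u - v`. -/
lemma aux_key {u v : ℝ} (hv : 0 ≤ v) (hvu : v ≤ u) (hu1 : u ≤ 1) :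
    3 * Real.log (1 + u) - Real.log (1 + v) ≤ 3 * u - v := by
  have hu : 0 ≤ u := le_trans hv hvu
  have h1 := aux_log_le hu
  have h2 := aux_le_log hv
  have h3 : v ^ 2 ≤ u ^ 2 := pow_le_pow_left₀ hv hvu 2
  have h4 : u ^ 3 ≤ u ^ 2 := by nlinarith [sq_nonneg u]
  linarith

/-- telescoping rewrite of one log difference. -/
lemma aux_tele {a m : ℝ} (ha : 0 < a) (hm0 : 0 < m) :
    Real.log ((m + a) / m) - Real.log ((m + 1 + a) / (m + 1)) =
      Real.log (1 + a / (m * (m + 1 + a))) := by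
  have hm1 : (0:ℝ) < m + 1 := by linarith
  have h2 : (0:ℝ) < m + 1 + a := by linarith
  have e : (m + a) / m = (1 + a / (m * (m + 1 + a))) * ((m + 1 + a) / (m + 1)) := by
    field_simp; ring
  rw [e, Real.log_mul (by positivity) (by positivity), add_sub_cancel_right]

/-- per-term facts. -/
lemma aux_term {x m : ℝ} (hx : 0 < x) (hm : 1 ≤ m) :
    0 ≤ (3 * Real.log ((m + 3*x) / m) - Real.log ((m + x) / m)) -
        (3 * Real.log ((m + 1 + 3*x) / (m + 1)) - Real.log ((m + 1 + x) / (m + 1))) ∧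
    (3 * Real.log ((m + 3*x) / m) - Real.log ((m + x) / m)) -
        (3 * Real.log ((m + 1 + 3*x) / (m + 1)) - Real.log ((m + 1 + x) / (m + 1))) <
      2 * x * ((4 * m + 3 * x) / (m * (m + x) * (m + 3 * x))) := by
  have hm0 : (0:ℝ) < m := lt_of_lt_of_le one_pos hm
  have hx3 : (0:ℝ) < 3 * x := by linarith
  have e3 := aux_tele hx3 hm0
  have e1 := aux_tele hx hm0
  set c3 : ℝ := 3*x / (m * (m + 1 + 3*x)) with hc3
  set c1 : ℝ := x / (m * (m + 1 + x)) with hc1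
  have ew : (3 * Real.log ((m + 3*x) / m) - Real.log ((m + x) / m)) -
        (3 * Real.log ((m + 1 + 3*x) / (m + 1)) - Real.log ((m + 1 + x) / (m + 1))) =
      3 * Real.log (1 + c3) - Real.log (1 + c1) := by
    rw [← e3, ← e1]; ring
  rw [ew]
  have hd3 : (0:ℝ) < m * (m + 1 + 3*x) := by positivity
  have hd1 : (0:ℝ) < m * (m + 1 + x) := by positivity
  have hc1nn : 0 ≤ c1 := by positivity
  have hc13 : c1 ≤ c3 := by
    rw [hc1, hc3, div_le_div_iff₀ hd1 hd3]
    nlinarith [mul_pos (mul_pos hx hm0) (show (0:ℝ) < m + 1 by linarith)]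
  have hc31 : c3 ≤ 1 := by
    rw [hc3, div_le_one hd3]; nlinarith [mul_pos hm0 hx]
  have hc3nn : 0 ≤ c3 := le_trans hc1nn hc13
  constructor
  · have l1 : Real.log (1 + c1) ≤ Real.log (1 + c3) :=
      Real.log_le_log (by linarith) (by linarith)
    have l0 : 0 ≤ Real.log (1 + c1) := Real.log_nonneg (by linarith)
    linarith
  · have key := aux_key hc1nn hc13 hc31
    have hrat : 2 * x * ((4 * m + 3 * x) / (m * (m + x) * (m + 3 * x))) - (3 * c3 - c1) =
        x * (8*m^2 + 8*m + 12*m*x + 6*x) /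
          (m * (m + x) * (m + 3*x) * (m + 1 + x) * (m + 1 + 3*x)) := by
      rw [hc3, hc1]; field_simp; ring
    have hpos : (0:ℝ) < x * (8*m^2 + 8*m + 12*m*x + 6*x) /
        (m * (m + x) * (m + 3*x) * (m + 1 + x) * (m + 1 + 3*x)) := by positivity
    linarith

/-- bound used for summability. -/
lemma aux_tle {x m : ℝ} (hx : 0 < x) (hm : 1 ≤ m) :
    (4 * m + 3 * x) / (m * (m + x) * (m + 3 * x)) ≤ (4 + 3 * x) * (1 / m ^ 2) := by
  have hm0 : (0:ℝ) < m := lt_of_lt_of_le one_pos hm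
  rw [div_le_iff₀ (by positivity), mul_one_div, div_mul_eq_mul_div,
    le_div_iff₀ (by positivity)]
  nlinarith [mul_pos hx hm0, mul_pos (mul_pos hx hm0) hm0, mul_pos (mul_pos hx hx) hm0,
    mul_pos (mul_pos (mul_pos hx hx) hx) hm0,
    mul_nonneg (mul_nonneg hx.le hm0.le) (mul_nonneg hm0.le (sub_nonneg.mpr hm))]

theorem stmt6 (x : ℝ) (hx : 0 < x) :
    3 * Real.log (1 + 3 * x) - Real.log (1 + x) <
      2 * x * ∑' k : ℕ,
        (4 * ((k : ℝ) + 1) + 3 * x) /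
          (((k : ℝ) + 1) * (((k : ℝ) + 1) + x) * (((k : ℝ) + 1) + 3 * x)) := by
  set t : ℕ → ℝ := fun k =>
    (4 * ((k : ℝ) + 1) + 3 * x) /
      (((k : ℝ) + 1) * (((k : ℝ) + 1) + x) * (((k : ℝ) + 1) + 3 * x)) with htdef
  set G : ℕ → ℝ := fun n =>
    3 * Real.log (((n : ℝ) + 1 + 3 * x) / ((n : ℝ) + 1)) -
      Real.log (((n : ℝ) + 1 + x) / ((n : ℝ) + 1)) with hGdef
  set w : ℕ → ℝ := fun k => G k - G (k + 1) with hwdef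
  have hm : ∀ k : ℕ, (1:ℝ) ≤ (k : ℝ) + 1 := fun k => by
    have : (0:ℝ) ≤ (k : ℝ) := Nat.cast_nonneg k
    linarith
  have hterm : ∀ k : ℕ, 0 ≤ w k ∧ w k < 2 * x * t k := by
    intro k
    obtain ⟨h1, h2⟩ := aux_term hx (hm k)
    constructor
    · rw [hwdef]
      simp only [hGdef]
      push_cast
      exact h1
    · rw [hwdef]
      simp only [hGdef, htdef]
      push_cast
      exact h2
  have hw_nonneg : ∀ k, 0 ≤ w k := fun k => (hterm k).1
  have hw_lt : ∀ k, w k < 2 * x * t k := fun k => (hterm k).2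
  -- summability of t
  have ht_nonneg : ∀ k : ℕ, 0 ≤ t k := by
    intro k; rw [htdef]; positivity
  have hbase : Summable (fun k : ℕ => (4 + 3 * x) * (1 / ((k:ℝ) + 1) ^ 2)) := by
    have h1 : Summable (fun n : ℕ => 1 / ((n:ℝ)) ^ 2) :=
      Real.summable_one_div_nat_pow.mpr one_lt_two
    have h2 := (summable_nat_add_iff 1).mpr h1
    have h3 : Summable (fun n : ℕ => 1 / ((n:ℝ) + 1) ^ 2) := by
      refine h2.congr fun n => ?_
      push_cast; ring
    exact h3.mul_left _
  have ht_le : ∀ k : ℕ, t k ≤ (4 + 3 * x) * (1 / ((k:ℝ) + 1) ^ 2) := by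
    intro k
    rw [htdef]
    exact aux_tle hx (hm k)
  have ht_summable : Summable t := Summable.of_nonneg_of_le ht_nonneg ht_le hbase
  have hg_summable : Summable (fun k => 2 * x * t k) := ht_summable.mul_left _
  have hw_summable : Summable w :=
    Summable.of_nonneg_of_le hw_nonneg (fun k => (hw_lt k).le) hg_summable
  -- G tends to 0
  have hlog0 : ∀ a : ℝ, Filter.Tendsto
      (fun n : ℕ => Real.log (((n:ℝ) + 1 + a) / ((n:ℝ) + 1)))
      Filter.atTop (nhds 0) := by
    intro a
    have h1 : Filter.Tendsto (fun n : ℕ => 1 / ((n:ℝ) + 1)) Filter.atTop (nhds 0) :=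
      tendsto_one_div_add_atTop_nhds_zero_nat
    have h2 : Filter.Tendsto (fun n : ℕ => 1 + a * (1 / ((n:ℝ) + 1)))
        Filter.atTop (nhds 1) := by
      have := Filter.Tendsto.const_add (1:ℝ) (h1.const_mul a)
      simpa using this
    have h3 : Filter.Tendsto (fun n : ℕ => ((n:ℝ) + 1 + a) / ((n:ℝ) + 1))
        Filter.atTop (nhds 1) := by
      refine h2.congr fun n => ?_
      have hn : ((n:ℝ) + 1) ≠ 0 := by positivity
      field_simp
    have h4 := (Real.continuousAt_log (by norm_num : (1:ℝ) ≠ 0)).tendsto.comp h3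
    simpa [Function.comp_def] using h4
  have hG0 : Filter.Tendsto G Filter.atTop (nhds 0) := by
    have := ((hlog0 (3 * x)).const_mul 3).sub (hlog0 x)
    simpa [hGdef] using this
  -- tsum of w
  have hsum_eq : ∀ n : ℕ, ∑ k ∈ Finset.range n, w k = G 0 - G n := by
    intro n
    rw [hwdef]
    exact Finset.sum_range_sub' G n
  have h1 : Filter.Tendsto (fun n => ∑ k ∈ Finset.range n, w k)
      Filter.atTop (nhds (∑' k, w k)) := hw_summable.hasSum.tendsto_sum_nat
  have h2 : Filter.Tendsto (fun n => ∑ k ∈ Finset.range n, w k)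
      Filter.atTop (nhds (G 0)) := by
    have h3 : Filter.Tendsto (fun n => G 0 - G n) Filter.atTop (nhds (G 0 - 0)) :=
      tendsto_const_nhds.sub hG0
    rw [sub_zero] at h3
    exact h3.congr fun n => (hsum_eq n).symm
  have htsumw : ∑' k, w k = G 0 := tendsto_nhds_unique h1 h2
  have hG0val : G 0 = 3 * Real.log (1 + 3 * x) - Real.log (1 + x) := by
    rw [hGdef]
    norm_num
  calc 3 * Real.log (1 + 3 * x) - Real.log (1 + x) = ∑' k, w k := by
        rw [htsumw, hG0val]
    _ < ∑' k, 2 * x * t k :=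
        Summable.tsum_lt_tsum_of_nonneg hw_nonneg (fun k => (hw_lt k).le) (hw_lt 0) hg_summable
    _ = 2 * x * ∑' k, t k := tsum_mul_left
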